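/- Let P be a complete cd-structure and F a presheaf of sets on C such that F(∅) is a one-point set and for every distinguished square Q in P (with corners B, Y, A, X) the square of sets F(X) → F(Y), F(X) → F(A), F(Y) → F(B), F(A) → F(B) is a pullback square. Then F is a sheaf in the topology t_P associated to P. -/

import Mathlib

open CategoryTheory CategoryTheory.Limits Opposite

universe w v u
variable {C : Type u} [Category.{v} C]

/-- A commutative square in `C`, with corners `B`, `Y`, `A`, `X`. -/
structure CDSquare (C : Type u) [Category.{v} C] where
  B : C
  Y : C
  A : C
  X : C
  top : B ⟶ Y
  left : B ⟶ A
  p : Y ⟶ X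
  e : A ⟶ X
  comm : top ≫ p = left ≫ e

/-- A morphism of squares. -/
structure CDSquareHom (Q' Q : CDSquare C) where
  hB : Q'.B ⟶ Q.B
  hY : Q'.Y ⟶ Q.Y
  hA : Q'.A ⟶ Q.A
  hX : Q'.X ⟶ Q.X
  commTop : Q'.top ≫ hY = hB ≫ Q.top
  commLeft : Q'.left ≫ hA = hB ≫ Q.left
  commP : Q'.p ≫ hX = hY ≫ Q.p
  commE : Q'.e ≫ hX = hA ≫ Q.e

/-- Two squares are isomorphic if there is a morphism of squares which is an isomorphism
on each corner. -/
def CDSquare.Iso (Q' Q : CDSquare C) : Prop :=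
  ∃ φ : CDSquareHom Q' Q, IsIso φ.hB ∧ IsIso φ.hY ∧ IsIso φ.hA ∧ IsIso φ.hX

/-- A cd-structure is a collection of commutative squares closed under isomorphism. -/
def IsCdStructure (P : Set (CDSquare C)) : Prop :=
  ∀ Q ∈ P, ∀ Q' : CDSquare C, CDSquare.Iso Q' Q → Q' ∈ P

/-- The sieve generated by the two morphisms `p : Y ⟶ X` and `e : A ⟶ X` of a square. -/
def CDSquare.sieve (Q : CDSquare C) : Sieve Q.X where
  arrows Z g := (∃ h : Z ⟶ Q.Y, g = h ≫ Q.p) ∨ (∃ h : Z ⟶ Q.A, g = h ≫ Q.e)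
  downward_closed := by
    rintro Z W g (⟨h, rfl⟩ | ⟨h, rfl⟩) f
    · exact Or.inl ⟨f ≫ h, (Category.assoc _ _ _).symm⟩
    · exact Or.inr ⟨f ≫ h, (Category.assoc _ _ _).symm⟩

variable [HasInitial C]

/-- The topology associated with a cd-structure: the smallest Grothendieck topology
for which the empty sieve covers the initial object and the sieve generated by the two
sides of any distinguished square is a covering sieve. -/
def cdTopology (P : Set (CDSquare C)) : GrothendieckTopology C :=
  sInf {J | (⊥ : Sieve (⊥_ C)) ∈ J (⊥_ C) ∧ ∀ Q ∈ P, Q.sieve ∈ J Q.X}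

/-- Simple coverings: the smallest class of families of morphisms containing the
isomorphisms and closed under composition with distinguished squares. -/
inductive IsSimpleCovering (P : Set (CDSquare C)) : ∀ {X : C}, Presieve X → Prop
  | of_iso {X Y : C} (f : Y ⟶ X) (hf : IsIso f) : IsSimpleCovering P (Presieve.singleton f)
  | of_square (Q : CDSquare C) (hQ : Q ∈ P) (Sy : Presieve Q.Y) (Sa : Presieve Q.A)
      (hy : IsSimpleCovering P Sy) (ha : IsSimpleCovering P Sa) :
      IsSimpleCovering P (fun Z g =>
        (∃ (h : Z ⟶ Q.Y), Sy h ∧ g = h ≫ Q.p) ∨ (∃ (h : Z ⟶ Q.A), Sa h ∧ g = h ≫ Q.e))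

/-- A cd-structure is complete if any covering sieve of an object not isomorphic to the
initial object contains a sieve generated by a simple covering. -/
def IsCompleteCd (P : Set (CDSquare C)) : Prop :=
  ∀ (X : C) (S : Sieve X), ¬ Nonempty (X ≅ ⊥_ C) → S ∈ cdTopology P X →
    ∃ T : Presieve X, IsSimpleCovering P T ∧ Sieve.generate T ≤ S

/-! By completeness, a covering sieve of `X` either contains the sieve generated by a simple
covering, or `X ≅ ∅`, in which case the empty sieve covers `X` and `F(X)` is a point.
The pullback condition on a distinguished square says precisely that `F` is a sheaf for the pair
`{p, e}`, so induction on simple coverings shows that `F` is separated for them, hence for every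
`t_P`-covering sieve. With separatedness in hand, a second induction glues along simple coverings:
the sections glued over `Y` and over `A` are compared over covering sieves of the objects mapping
to both, where they agree locally. -/

section

variable {D : Type*} [Category D] {F : Dᵒᵖ ⥤ Type w}

namespace CategoryTheory.Presieve

lemma IsSeparatedFor.of_le {X : D} {R S : Presieve X} (hR : IsSeparatedFor F R) (hRS : R ≤ S) :
    IsSeparatedFor F S := fun x _ _ ht₁ ht₂ =>
  hR (x.restrict hRS) _ _ (isAmalgamation_restrict hRS x _ ht₁) (isAmalgamation_restrict hRS x _ ht₂)

lemma isSheafFor_bot {X : D} [Nonempty (F.obj (op X))] [Subsingleton (F.obj (op X))] :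
    IsSheafFor F (⊥ : Presieve X) := fun _ _ =>
  ⟨Classical.arbitrary _, fun _ _ hg => hg.elim, fun _ _ => Subsingleton.elim _ _⟩

lemma isSheafFor_singleton_of_isIso {X Y : D} (f : Y ⟶ X) [IsIso f] :
    IsSheafFor F (singleton f) := by
  rw [isSheafFor_iff_generate, Sieve.generate_of_singleton_isSplitEpi]
  exact isSheafFor_top F

lemma IsSeparated.isSheafFor_of_le {J : GrothendieckTopology D} (hF : IsSeparated J F) {X : D}
    {S₀ S : Sieve X} (hle : S₀ ≤ S) (hS₀ : S₀ ∈ J X) (h : IsSheafFor F S₀.arrows) :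
    IsSheafFor F S.arrows :=
  isSheafFor_subsieve_aux F hle h fun _ g _ => hF _ (J.pullback_stable g hS₀)

variable {ι : Type*} {X : D} {Y : ι → D} {f : ∀ i, Y i ⟶ X} {R : ∀ i, Presieve (Y i)}

lemma isSeparatedFor_bindOfArrows (hf : IsSeparatedFor F (ofArrows Y f))
    (hR : ∀ i, IsSeparatedFor F (R i)) : IsSeparatedFor F (bindOfArrows Y f R) := by
  intro x t₁ t₂ ht₁ ht₂
  refine hf.ext fun _ _ ⟨i⟩ => (hR i).ext fun Z g hg => ?_
  simp only [← Functor.map_comp_apply, ← op_comp, ht₁ _ (.mk i g hg), ht₂ _ (.mk i g hg)]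

lemma isSheafFor_bindOfArrows {J : GrothendieckTopology D} (hF : IsSeparated J F)
    (hf : IsSheafFor F (ofArrows Y f)) (hR : ∀ i, IsSheafFor F (R i))
    (hRJ : ∀ i, Sieve.generate (R i) ∈ J (Y i)) : IsSheafFor F (bindOfArrows Y f R) := by
  refine (isSeparatedFor_bindOfArrows hf.isSeparatedFor fun i => (hR i).isSeparatedFor).isSheafFor
    fun x hx => ?_
  let y (i : ι) : FamilyOfElements F (R i) := fun _ g hg => x (g ≫ f i) (.mk i g hg)
  have hy (i : ι) : (y i).Compatible := fun _ _ _ _ _ _ _ _ _ comm =>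
    hx _ _ _ _ (by simp only [reassoc_of% comm])
  let s (i : ι) := (hR i).amalgamate (y i) (hy i)
  have hs (i : ι) : (y i).IsAmalgamation (s i) := (hR i).isAmalgamation (hy i)
  have hcompat : Arrows.Compatible F f s := by
    intro i j Z gi gj hij
    have hcov := J.intersection_covering (J.pullback_stable gi (hRJ i)) (J.pullback_stable gj (hRJ j))
    refine (hF _ hcov).ext ?_
    rintro W k ⟨⟨Vi, mi, ri, hri, hki⟩, ⟨Vj, mj, rj, hrj, hkj⟩⟩
    have restrict_i : F.map k.op (F.map gi.op (s i)) = F.map mi.op (x _ (.mk i ri hri)) := by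
      rw [← Functor.map_comp_apply, ← op_comp, ← hki, op_comp, Functor.map_comp_apply, hs i _ hri]
    have restrict_j : F.map k.op (F.map gj.op (s j)) = F.map mj.op (x _ (.mk j rj hrj)) := by
      rw [← Functor.map_comp_apply, ← op_comp, ← hkj, op_comp, Functor.map_comp_apply, hs j _ hrj]
    rw [restrict_i, restrict_j]
    exact hx _ _ _ _ (by simp only [reassoc_of% hki, reassoc_of% hkj, hij])
  obtain ⟨t, ht, -⟩ := (isSheafFor_arrows_iff _ _).1 hf s hcompat
  refine ⟨t, ?_⟩
  rintro _ _ ⟨i, g, hg⟩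
  rw [op_comp, Functor.map_comp_apply, ht i]
  exact hs i g hg

end CategoryTheory.Presieve

lemma nonempty_and_subsingleton_obj_of_iso {X X' : D} (i : X ≅ X')
    (h : Nonempty (F.obj (op X')) ∧ Subsingleton (F.obj (op X'))) :
    Nonempty (F.obj (op X)) ∧ Subsingleton (F.obj (op X)) :=
  let e := (F.mapIso i.op).toEquiv
  h.imp e.nonempty_congr.1 e.subsingleton_congr.1

namespace CDSquare

variable (Q : CDSquare D)

def legSource : Bool → D
  | true => Q.Y
  | false => Q.A

def leg : ∀ b, Q.legSource b ⟶ Q.X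
  | true => Q.p
  | false => Q.e

lemma sieve_le_ofArrows_leg : Q.sieve ≤ Sieve.ofArrows Q.legSource Q.leg := by
  rintro Z g (⟨h, rfl⟩ | ⟨h, rfl⟩)
  · exact ⟨_, h, _, .mk true, rfl⟩
  · exact ⟨_, h, _, .mk false, rfl⟩

lemma bindOfArrows_leg (Sy : Presieve Q.Y) (Sa : Presieve Q.A) :
    (Presieve.bindOfArrows Q.legSource Q.leg fun | true => Sy | false => Sa) =
      fun Z g => (∃ h : Z ⟶ Q.Y, Sy h ∧ g = h ≫ Q.p) ∨ (∃ h : Z ⟶ Q.A, Sa h ∧ g = h ≫ Q.e) := by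
  funext Z g
  refine propext ⟨?_, ?_⟩
  · rintro ⟨_ | _, h, hh⟩
    exacts [Or.inr ⟨h, hh, rfl⟩, Or.inl ⟨h, hh, rfl⟩]
  · rintro (⟨h, hh, rfl⟩ | ⟨h, hh, rfl⟩)
    exacts [.mk (f := Q.leg) true h hh, .mk (f := Q.leg) false h hh]

lemma isSheafFor_ofArrows_leg
    (hQ : IsPullback (F.map Q.p.op) (F.map Q.e.op) (F.map Q.top.op) (F.map Q.left.op)) :
    Presieve.IsSheafFor F (Presieve.ofArrows Q.legSource Q.leg) := by
  rw [Presieve.isSheafFor_arrows_iff]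
  intro x hx
  obtain ⟨t, hty, hta⟩ := Types.exists_of_isPullback hQ (x true) (x false)
    (hx true false Q.B Q.top Q.left Q.comm)
  refine ⟨t, fun | true => hty | false => hta, fun t' ht' => ?_⟩
  exact Types.ext_of_isPullback hQ ((ht' true).trans hty.symm) ((ht' false).trans hta.symm)

end CDSquare

lemma IsSimpleCovering.isSeparatedFor {P : Set (CDSquare D)}
    (hpb : ∀ Q ∈ P, IsPullback (F.map Q.p.op) (F.map Q.e.op) (F.map Q.top.op) (F.map Q.left.op))
    {X : D} {T : Presieve X} (hT : IsSimpleCovering P T) : Presieve.IsSeparatedFor F T := by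
  induction hT with
  | of_iso f hf => exact (Presieve.isSheafFor_singleton_of_isIso f).isSeparatedFor
  | of_square Q hQ Sy Sa _ _ ihy iha =>
    rw [← Q.bindOfArrows_leg]
    exact Presieve.isSeparatedFor_bindOfArrows (Q.isSheafFor_ofArrows_leg (hpb Q hQ)).isSeparatedFor
      fun | true => ihy | false => iha

end

variable {P : Set (CDSquare C)} {F : Cᵒᵖ ⥤ Type w}

lemma bot_mem_cdTopology : (⊥ : Sieve (⊥_ C)) ∈ cdTopology P (⊥_ C) :=
  (GrothendieckTopology.mem_sInf _ _).2 fun _ hJ => hJ.1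

lemma CDSquare.sieve_mem_cdTopology {Q : CDSquare C} (hQ : Q ∈ P) : Q.sieve ∈ cdTopology P Q.X :=
  (GrothendieckTopology.mem_sInf _ _).2 fun _ hJ => hJ.2 Q hQ

namespace IsSimpleCovering

variable {X : C} {T : Presieve X}

lemma generate_mem_cdTopology (hT : IsSimpleCovering P T) : Sieve.generate T ∈ cdTopology P X := by
  induction hT with
  | of_iso f hf =>
    rw [Sieve.generate_of_singleton_isSplitEpi]
    exact (cdTopology P).top_mem _
  | of_square Q hQ Sy Sa _ _ ihy iha =>
    rw [← Q.bindOfArrows_leg]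
    exact (cdTopology P).bindOfArrows
      ((cdTopology P).superset_covering Q.sieve_le_ofArrows_leg (CDSquare.sieve_mem_cdTopology hQ))
      fun | true => ihy | false => iha

lemma isSheafFor
    (hpb : ∀ Q ∈ P, IsPullback (F.map Q.p.op) (F.map Q.e.op) (F.map Q.top.op) (F.map Q.left.op))
    (hF : Presieve.IsSeparated (cdTopology P) F) (hT : IsSimpleCovering P T) :
    Presieve.IsSheafFor F T := by
  induction hT with
  | of_iso f hf => exact Presieve.isSheafFor_singleton_of_isIso f
  | of_square Q hQ Sy Sa hy ha ihy iha =>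
    rw [← Q.bindOfArrows_leg]
    exact Presieve.isSheafFor_bindOfArrows hF (Q.isSheafFor_ofArrows_leg (hpb Q hQ))
      (fun | true => ihy | false => iha)
      (fun | true => hy.generate_mem_cdTopology | false => ha.generate_mem_cdTopology)

end IsSimpleCovering

lemma isSeparated_cdTopology (hcomp : IsCompleteCd P)
    (h0 : Nonempty (F.obj (op (⊥_ C))) ∧ Subsingleton (F.obj (op (⊥_ C))))
    (hpb : ∀ Q ∈ P, IsPullback (F.map Q.p.op) (F.map Q.e.op) (F.map Q.top.op) (F.map Q.left.op)) :
    Presieve.IsSeparated (cdTopology P) F := by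
  intro X S hS
  by_cases hX : Nonempty (X ≅ ⊥_ C)
  · have := (nonempty_and_subsingleton_obj_of_iso hX.some h0).2
    exact fun _ _ _ _ _ => Subsingleton.elim _ _
  · obtain ⟨T, hT, hTS⟩ := hcomp X S hX hS
    exact ((Presieve.isSeparatedFor_iff_generate (R := T)).1 (hT.isSeparatedFor hpb)).of_le hTS

theorem statement5_general (P : Set (CDSquare C)) (hcomp : IsCompleteCd P)
    (F : Cᵒᵖ ⥤ Type w)
    (h0 : Nonempty (F.obj (op (⊥_ C))) ∧ Subsingleton (F.obj (op (⊥_ C))))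
    (hpb : ∀ Q ∈ P, IsPullback (F.map Q.p.op) (F.map Q.e.op) (F.map Q.top.op) (F.map Q.left.op)) :
    Presheaf.IsSheaf (cdTopology P) F := by
  rw [isSheaf_iff_isSheaf_of_type]
  have hF := isSeparated_cdTopology hcomp h0 hpb
  intro X S hS
  by_cases hX : Nonempty (X ≅ ⊥_ C)
  · obtain ⟨i⟩ := hX
    obtain ⟨_, _⟩ := nonempty_and_subsingleton_obj_of_iso i h0
    have hbot : (⊥ : Sieve X) ∈ cdTopology P X := by
      simpa only [Sieve.pullback_bot] using (cdTopology P).pullback_stable i.hom bot_mem_cdTopology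
    exact hF.isSheafFor_of_le bot_le hbot Presieve.isSheafFor_bot
  · obtain ⟨T, hT, hTS⟩ := hcomp X S hX hS
    exact hF.isSheafFor_of_le hTS hT.generate_mem_cdTopology
      ((Presieve.isSheafFor_iff_generate T).1 (hT.isSheafFor hpb hF))

theorem statement5 (P : Set (CDSquare C)) (hP : IsCdStructure P) (hcomp : IsCompleteCd P)
    (F : Cᵒᵖ ⥤ Type w)
    (h0 : Nonempty (F.obj (op (⊥_ C))) ∧ Subsingleton (F.obj (op (⊥_ C))))
    (hpb : ∀ Q ∈ P, IsPullback (F.map Q.p.op) (F.map Q.e.op) (F.map Q.top.op) (F.map Q.left.op)) :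
    Presheaf.IsSheaf (cdTopology P) F :=
  statement5_general P hcomp F h0 hpb
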